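/- arXiv:1607.00522 — 8 statements merged into one kernel-verified Lean document; each statement's English description precedes it below -/
import Mathlib

section
/- Let a, a', b, b' be complex numbers. The polynomial identity (∂+λ+2μ)(∂+aλ+b) = (∂+2λ+2μ)((a'-1)λ-μ+b') + (∂+2μ)(∂+a'λ+μ+b') holds in ℂ[∂,λ,μ] if and only if a' = a/2 + 1 and b' = b/2. -/
/-- The Jacobi-identity condition for CSV(a,b): the polynomial identity
(∂+λ+2μ)(∂+aλ+b) = (∂+2λ+2μ)((a'-1)λ-μ+b') + (∂+2μ)(∂+a'λ+μ+b') holds in ℂ[∂,λ,μ]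
iff a' = a/2 + 1 and b' = b/2. -/
theorem stmt0 (a a' b b' : ℂ) :
    (∀ d l m : ℂ,
      (d + l + 2*m) * (d + a*l + b) =
        (d + 2*l + 2*m) * ((a' - 1)*l - m + b') + (d + 2*m) * (d + a'*l + m + b'))
      ↔ (a' = a/2 + 1 ∧ b' = b/2) := by
  refine ⟨fun h => ?_, ?_⟩
  · have h₁₀₀ := h 1 0 0
    have h₁₁₀ := h 1 1 0
    exact ⟨by linear_combination h₁₀₀ / 2 - h₁₁₀ / 4, by linear_combination -h₁₀₀ / 2⟩
  · rintro ⟨rfl, rfl⟩ d l m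
    ring
end

section
/- Let a, b ∈ ℂ, and let g : ℂ → ℂ be a polynomial function satisfying -μ g(μ) = ((a-1)λ - μ + b) g(λ+μ) for all λ, μ ∈ ℂ (as an identity of polynomials in λ and μ). If a ≠ 1 or b ≠ 0, then g = 0. -/
/-- If -μ g(μ) = ((a-1)λ - μ + b) g(λ+μ) identically and (a,b) ≠ (1,0), then g = 0. -/
theorem stmt4 (a b : ℂ) (g : Polynomial ℂ)
    (h : ∀ l m : ℂ, -m * g.eval m = ((a - 1)*l - m + b) * g.eval (l + m))
    (hab : a ≠ 1 ∨ b ≠ 0) :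
    g = 0 := by
  by_contra hg
  have hx : ∃ x : ℂ, g.eval x ≠ 0 := by
    by_contra hall
    push_neg at hall
    exact hg (Polynomial.zero_of_eval_zero g hall)
  obtain ⟨x, hx⟩ := hx
  have key : ∀ m : ℂ, -m * g.eval m = ((a - 1) * (x - m) - m + b) * g.eval x := by
    intro m
    have := h (x - m) m
    rwa [sub_add_cancel] at this
  -- at m = 0 : (a-1)x + b = 0
  have h0 : (a - 1) * x + b = 0 := by
    have hk := key 0
    simp only [neg_zero, zero_mul, sub_zero, mul_zero] at hk
    have : ((a - 1) * x + b) * g.eval x = 0 := by linear_combination -hk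
    rcases mul_eq_zero.mp this with h1 | h2
    · exact h1
    · exact absurd h2 hx
  -- for m ≠ 0 : g(m) = a * g(x)
  have hconst : ∀ m : ℂ, m ≠ 0 → g.eval m = a * g.eval x := by
    intro m hm
    have hk := key m
    have h2 : -m * g.eval m = -m * (a * g.eval x) := by
      linear_combination hk + g.eval x * h0
    exact mul_left_cancel₀ (neg_ne_zero.mpr hm) h2
  -- hence g - C (a * g x) has infinitely many roots, so g is constant
  have hpoly : g - Polynomial.C (a * g.eval x) = 0 := by
    apply Polynomial.eq_zero_of_infinite_isRoot
    apply Set.Infinite.mono (s := {m : ℂ | m ≠ 0})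
    · intro m hm
      simp only [Set.mem_setOf_eq, Polynomial.IsRoot, Polynomial.eval_sub,
        Polynomial.eval_C]
      rw [hconst m hm]
      ring
    · have : ({m : ℂ | m ≠ 0}) = ({0} : Set ℂ)ᶜ := by ext y; simp
      rw [this]
      exact Set.Finite.infinite_compl (Set.finite_singleton 0)
  have hgc : g = Polynomial.C (a * g.eval x) := by linear_combination (norm := abel) hpoly
  have hxx : g.eval x = a * g.eval x := by
    conv_lhs => rw [hgc]
    simp
  have ha : a = 1 := by
    have : (a - 1) * g.eval x = 0 := by linear_combination -hxx
    rcases mul_eq_zero.mp this with h1 | h2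
    · linear_combination h1
    · exact absurd h2 hx
  have hb : b = 0 := by
    rw [ha] at h0
    linear_combination h0
  rcases hab with h' | h'
  · exact h' ha
  · exact h' hb
end

section
/- Suppose g_i ∈ ℂ[∂,λ] for i ∈ ℤ satisfy g_j(∂+λ,μ)·g_i(∂,λ) = g_i(∂+μ,λ)·g_j(∂,μ) in ℂ[∂,λ,μ] for all i, j. Then each g_i is independent of ∂, i.e., g_i ∈ ℂ[λ]. -/
/-!
View `g i` as a polynomial in `∂` over `ℂ[λ]`, say `c(λ) ∂^D + d(λ) ∂^(D-1) + ⋯`, and take `i = j`.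
Comparing the coefficients of `∂^(2D-1)` on both sides of
`g(∂+λ, μ) g(∂, λ) = g(∂+μ, λ) g(∂, μ)` leaves `D c(λ) c(μ) (λ - μ) = 0`. Choosing `λ ≠ μ` away
from the finitely many roots of `c` forces `D = 0`.
-/

open Polynomial

namespace Polynomial

variable {R : Type*} [CommRing R]

theorem coeff_taylor_of_natDegree_le {f : R[X]} {n : ℕ} (hf : f.natDegree ≤ n) (r : R) :
    (taylor r f).coeff n = f.coeff n := by
  rcases hf.lt_or_eq with hlt | rfl
  · have hlt' : (taylor r f).natDegree < n := by rwa [natDegree_taylor]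
    rw [coeff_eq_zero_of_natDegree_lt hlt, coeff_eq_zero_of_natDegree_lt hlt']
  · exact coeff_taylor_natDegree r f

theorem coeff_taylor_of_natDegree_le_succ {f : R[X]} {n : ℕ} (hf : f.natDegree ≤ n + 1) (r : R) :
    (taylor r f).coeff n = f.coeff n + (n + 1) * f.coeff (n + 1) * r := by
  have hdeg : (hasseDeriv n f).natDegree < 2 := by
    have := natDegree_hasseDeriv_le f n
    omega
  rw [taylor_coeff, eval_eq_sum_range' hdeg]
  simp [Finset.sum_range_succ, hasseDeriv_coeff, add_comm 1 n]

theorem coeff_mul_of_natDegree_le_succ {f g : R[X]} {a b : ℕ} (hf : f.natDegree ≤ a + 1)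
    (hg : g.natDegree ≤ b + 1) :
    (f * g).coeff (a + b + 1) = f.coeff (a + 1) * g.coeff b + f.coeff a * g.coeff (b + 1) := by
  rw [coeff_mul, Finset.sum_eq_add (a + 1, b) (a, b + 1) (by simp)]
  · rintro ⟨i, j⟩ hij hne
    rw [Finset.HasAntidiagonal.mem_antidiagonal] at hij
    obtain hi | hj : a + 1 < i ∨ b + 1 < j := by
      simp only [ne_eq, Prod.mk.injEq] at hne
      omega
    · rw [coeff_eq_zero_of_natDegree_lt (hf.trans_lt hi), zero_mul]
    · rw [coeff_eq_zero_of_natDegree_lt (hg.trans_lt hj), mul_zero]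
  · exact fun h => (h (Finset.HasAntidiagonal.mem_antidiagonal.2 (by omega))).elim
  · exact fun h => (h (Finset.HasAntidiagonal.mem_antidiagonal.2 (by omega))).elim

theorem succ_mul_coeff_mul_coeff_mul_sub_eq_zero_of_taylor_mul_eq {f g : R[X]} {n : ℕ}
    (hf : f.natDegree ≤ n + 1) (hg : g.natDegree ≤ n + 1) {l m : R}
    (h : taylor l f * g = taylor m g * f) :
    (n + 1) * f.coeff (n + 1) * g.coeff (n + 1) * (l - m) = 0 := by
  have hcoeff := congrArg (coeff · (n + n + 1)) h
  rw [coeff_mul_of_natDegree_le_succ ((natDegree_taylor f l).trans_le hf) hg,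
    coeff_mul_of_natDegree_le_succ ((natDegree_taylor g m).trans_le hg) hf,
    coeff_taylor_of_natDegree_le hf, coeff_taylor_of_natDegree_le_succ hf,
    coeff_taylor_of_natDegree_le hg, coeff_taylor_of_natDegree_le_succ hg] at hcoeff
  linear_combination hcoeff

variable {K : Type*} [CommRing K] [IsDomain K] [CharZero K]

theorem natDegree_eq_zero_of_taylor_map_mul_comm (P : K[X][X])
    (h : ∀ l m : K, taylor l (P.map (evalRingHom m)) * P.map (evalRingHom l) =
      taylor m (P.map (evalRingHom l)) * P.map (evalRingHom m)) :
    P.natDegree = 0 := by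
  by_contra hP
  obtain ⟨n, hn⟩ := Nat.exists_eq_succ_of_ne_zero hP
  have hc : P.leadingCoeff ≠ 0 := leadingCoeff_ne_zero.2 (by rintro rfl; simp at hP)
  obtain ⟨l, hl, m, hm, hlm⟩ :=
    (finite_setOfPred_isRoot hc).infinite_compl.nontrivial
  have hdeg (y : K) : (P.map (evalRingHom y)).natDegree ≤ n + 1 := natDegree_map_le.trans hn.le
  have hvanish :=
    succ_mul_coeff_mul_coeff_mul_sub_eq_zero_of_taylor_mul_eq (hdeg m) (hdeg l) (h l m)
  have hlead : P.coeff (n + 1) = P.leadingCoeff := by rw [leadingCoeff, hn]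
  simp only [coeff_map, coe_evalRingHom, hlead] at hvanish
  exact mul_ne_zero (mul_ne_zero (mul_ne_zero (Nat.cast_add_one_ne_zero n) hm) hl)
    (sub_ne_zero.2 hlm) hvanish

theorem eval_map_evalRingHom_mvPolynomial_aeval (G : MvPolynomial (Fin 2) R) (x y : R) :
    ((MvPolynomial.aeval ![X, C X] G : R[X][X]).map (evalRingHom y)).eval x =
      MvPolynomial.eval ![x, y] G := by
  induction G using MvPolynomial.induction_on with
  | C a => simp
  | add p q hp hq => simp [hp, hq]
  | mul_X p i hp => fin_cases i <;> simp [hp]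

end Polynomial

/-- If g_j(∂+λ,μ)g_i(∂,λ) = g_i(∂+μ,λ)g_j(∂,μ) for all i,j, then each g_i is
independent of ∂, i.e. g_i ∈ ℂ[λ]. -/
theorem stmt6 (g : ℤ → MvPolynomial (Fin 2) ℂ)
    (h : ∀ (i j : ℤ) (x l m : ℂ),
      MvPolynomial.eval ![x + l, m] (g j) * MvPolynomial.eval ![x, l] (g i)
        = MvPolynomial.eval ![x + m, l] (g i) * MvPolynomial.eval ![x, m] (g j)) :
    ∀ i : ℤ, ∃ q : Polynomial ℂ,
      ∀ x y : ℂ, MvPolynomial.eval ![x, y] (g i) = q.eval y := by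
  intro i
  set P : ℂ[X][X] := MvPolynomial.aeval ![X, C X] (g i)
  have hP (x y : ℂ) : MvPolynomial.eval ![x, y] (g i) = (P.map (evalRingHom y)).eval x :=
    (eval_map_evalRingHom_mvPolynomial_aeval _ x y).symm
  have hdeg : P.natDegree = 0 := natDegree_eq_zero_of_taylor_map_mul_comm P fun l m =>
    Polynomial.funext fun x => by simpa [hP, taylor_eval] using h i i x l m
  refine ⟨P.coeff 0, fun x y => ?_⟩
  rw [hP, eq_C_of_natDegree_eq_zero hdeg]
  simp
end

section
/- Let a, b ∈ ℂ with (a,b) ≠ (0,0), and let h : ℤ → ℂ[λ] satisfy ((a/2)λ - μ + b/2)·h_{i+j}(λ+μ) = -μ·c^i·h_j(μ) in ℂ[λ,μ] for all i, j ∈ ℤ, where c ∈ ℂ is fixed. Then h_i = 0 for all i ∈ ℤ. -/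
open Polynomial

theorem Polynomial.C_mul_X_add_C_ne_zero {R : Type*} [Semiring R] {a b : R}
    (hab : ¬(a = 0 ∧ b = 0)) : C a * X + C b ≠ 0 := by
  intro h
  have ha : a = 0 := by simpa using congrArg (coeff · 1) h
  have hb : b = 0 := by simpa using congrArg (coeff · 0) h
  exact hab ⟨ha, hb⟩

/-- Setting `j = μ = 0` leaves `((a/2)λ + b/2) h_i(λ) = 0`, and the linear factor is nonzero. -/
theorem stmt8 (a b c : ℂ) (hab : ¬(a = 0 ∧ b = 0)) (h : ℤ → Polynomial ℂ)
    (hyp : ∀ (i j : ℤ) (l m : ℂ),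
      ((a/2)*l - m + b/2) * (h (i + j)).eval (l + m) = -m * c^i * (h j).eval m) :
    ∀ i : ℤ, h i = 0 := by
  intro i
  have hprod : (C (a/2) * X + C (b/2)) * h i = 0 :=
    Polynomial.funext fun l => by simpa using hyp i 0 l 0
  have hlin : C (a/2) * X + C (b/2) ≠ 0 :=
    C_mul_X_add_C_ne_zero fun ⟨ha, hb⟩ => hab ⟨by simpa using ha, by simpa using hb⟩
  exact (mul_eq_zero.mp hprod).resolve_left hlin
end

section
/- Let e ∈ ℂ with e ≠ 0 and suppose h : ℤ × ℤ → ℂ[∂,λ], written h_{j,m}, satisfies h_{j,m}(∂+λ,μ)·e = e·h_{j,i+m}(∂,μ) in ℂ[∂,λ,μ] for all i, j, m ∈ ℤ, and also h_{j,m}(∂+λ,μ)·h_{i,j+m}(∂,λ) - h_{i,m}(∂+μ,λ)·h_{j,i+m}(∂,μ) = (λ-μ)·e for all i, j, m. Then a contradiction follows; i.e., no such families exist with e ≠ 0. -/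
/-!
Cancelling `e` in the first relation gives `h_{j,m}(∂+λ,μ) = h_{j,i+m}(∂,μ)`. Substituting this
(for both factors) into the second relation turns its left side into `ab - ba` for two scalars,
so `(λ - μ) e = 0` for all `λ, μ`, forcing `e = 0`.
-/

open MvPolynomial

section

variable {R : Type*} [CommRing R] [IsDomain R] {e : R} {h : ℤ → ℤ → MvPolynomial (Fin 2) R}

theorem eval_translate_eq (he : e ≠ 0)
    (h1 : ∀ (i j m : ℤ) (x l μ : R),
      eval ![x + l, μ] (h j m) * e = e * eval ![x, μ] (h j (i + m)))
    (i j m : ℤ) (x l μ : R) :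
    eval ![x + l, μ] (h j m) = eval ![x, μ] (h j (i + m)) :=
  mul_right_cancel₀ he ((h1 i j m x l μ).trans (mul_comm _ _))

theorem eval_bracket_eq_zero (he : e ≠ 0)
    (h1 : ∀ (i j m : ℤ) (x l μ : R),
      eval ![x + l, μ] (h j m) * e = e * eval ![x, μ] (h j (i + m)))
    (i j m : ℤ) (x l μ : R) :
    eval ![x + l, μ] (h j m) * eval ![x, l] (h i (j + m))
      - eval ![x + μ, l] (h i m) * eval ![x, μ] (h j (i + m)) = 0 := by
  rw [eval_translate_eq he h1 i j m x l μ, eval_translate_eq he h1 j i m x μ l, mul_comm, sub_self]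

end

/-- Case a = 1, b = 0 of Lemma 5.3: no families h_{j,m} can satisfy
h_{j,m}(∂+λ,μ)·e = e·h_{j,i+m}(∂,μ) and
h_{j,m}(∂+λ,μ)h_{i,j+m}(∂,λ) - h_{i,m}(∂+μ,λ)h_{j,i+m}(∂,μ) = (λ-μ)e with e ≠ 0. -/
theorem stmt12 (e : ℂ) (he : e ≠ 0) (h : ℤ → ℤ → MvPolynomial (Fin 2) ℂ)
    (h1 : ∀ (i j m : ℤ) (x l μ : ℂ),
      MvPolynomial.eval ![x + l, μ] (h j m) * e
        = e * MvPolynomial.eval ![x, μ] (h j (i + m)))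
    (h2 : ∀ (i j m : ℤ) (x l μ : ℂ),
      MvPolynomial.eval ![x + l, μ] (h j m) * MvPolynomial.eval ![x, l] (h i (j + m))
        - MvPolynomial.eval ![x + μ, l] (h i m) * MvPolynomial.eval ![x, μ] (h j (i + m))
        = (l - μ) * e) :
    False := by
  have hzero : (1 - 0) * e = 0 :=
    (h2 0 0 0 0 1 0).symm.trans (eval_bracket_eq_zero he h1 0 0 0 0 1 0)
  exact he (by simpa using hzero)
end

section
/- Let b ∈ ℂ and suppose g₁, g₂, g₃ ∈ ℂ[∂,λ] satisfy, as identities in ℂ[∂,λ,μ]: (∂+λ+μ+b)·g₁(∂,λ) = (∂+2μ)·g₁(∂+μ,λ), (∂+λ+μ+b)·g₂(∂,λ) = (∂+μ+b)·g₂(∂+μ,λ), and (∂+λ+μ+b)·g₃(∂,λ) = (∂+(3/2)μ+b/2)·g₃(∂+μ,λ). Then g₁ = g₂ = g₃ = 0. -/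
namespace MvPolynomial

theorem X_add_C_ne_zero {R σ : Type*} [CommRing R] [Nontrivial R] (i : σ) (c : R) :
    X i + C c ≠ 0 := fun h => by
  simpa using congrArg (eval fun _ => 1 - c) h

variable {R : Type*} [CommRing R] [IsDomain R] [Infinite R]

theorem eq_zero_of_forall_mul_eval_eq_zero {σ : Type*} {i : σ} {c : R} {p : MvPolynomial σ R}
    (h : ∀ v : σ → R, (v i + c) * eval v p = 0) : p = 0 := by
  have hprod : (X i + C c) * p = 0 := funext fun v => by simpa using h v
  exact (mul_eq_zero.mp hprod).resolve_left (X_add_C_ne_zero i c)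

theorem eq_zero_of_forall_mul_eval_vecCons_eq_zero {c : R} {p : MvPolynomial (Fin 2) R}
    (h : ∀ x l : R, (l + c) * eval ![x, l] p = 0) : p = 0 :=
  eq_zero_of_forall_mul_eval_eq_zero (i := 1) fun v => by
    have hv : ![v 0, v 1] = v := by ext i; fin_cases i <;> rfl
    simpa only [hv] using h (v 0) (v 1)

end MvPolynomial

open MvPolynomial in
/-- From applying a degree-c conformal derivation of CSV(1,b) with D(L_i)=0 to
[L_0 μ M_i] = (∂+μ+b)M_i: the three resulting identities force g₁ = g₂ = g₃ = 0. -/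
theorem stmt13 (b : ℂ) (g₁ g₂ g₃ : MvPolynomial (Fin 2) ℂ)
    (h1 : ∀ x l μ : ℂ,
      (x + l + μ + b) * MvPolynomial.eval ![x, l] g₁
        = (x + 2*μ) * MvPolynomial.eval ![x + μ, l] g₁)
    (h2 : ∀ x l μ : ℂ,
      (x + l + μ + b) * MvPolynomial.eval ![x, l] g₂
        = (x + μ + b) * MvPolynomial.eval ![x + μ, l] g₂)
    (h3 : ∀ x l μ : ℂ,
      (x + l + μ + b) * MvPolynomial.eval ![x, l] g₃
        = (x + (3/2)*μ + b/2) * MvPolynomial.eval ![x + μ, l] g₃) :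
    g₁ = 0 ∧ g₂ = 0 ∧ g₃ = 0 := by
  -- At μ = 0 the λ-dependence survives on the left only.
  refine ⟨eq_zero_of_forall_mul_eval_vecCons_eq_zero (c := b) fun x l => ?_,
    eq_zero_of_forall_mul_eval_vecCons_eq_zero (c := 0) fun x l => ?_,
    eq_zero_of_forall_mul_eval_vecCons_eq_zero (c := b / 2) fun x l => ?_⟩
  · have h := h1 x l 0
    simp only [add_zero, mul_zero] at h
    linear_combination h
  · have h := h2 x l 0
    simp only [add_zero] at h
    linear_combination h
  · have h := h3 x l 0
    simp only [add_zero, mul_zero] at h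
    linear_combination h
end

section
/- Let b, p ∈ ℂ and suppose h₁, h₂, h₃ ∈ ℂ[∂,λ] satisfy in ℂ[∂,λ,μ]: (∂+λ+μ+b/2)·h₁(∂,λ) = (∂+2μ)·h₁(∂+μ,λ), (∂+λ+μ+b/2)·h₂(∂,λ) = (∂+b)·h₂(∂+μ,λ) + p·(∂+2λ+2μ), and (∂+λ+μ+b/2)·h₃(∂,λ) = (∂+μ+b/2)·h₃(∂+μ,λ). Then h₁ = h₂ = h₃ = 0 and p = 0. -/
/-!
Setting `μ = 0` turns each identity into `(λ - c) · hₖ(∂, λ) = 0` for a constant `c`, so `hₖ`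
vanishes off a line and hence is zero. For `p`, specialising the second identity to `μ = 0`,
`λ = b/2`, `∂ = 1 - b` makes the `h₂` terms cancel and leaves `p = 0`.
-/

open MvPolynomial

theorem MvPolynomial.eq_zero_of_forall_sub_mul_eval_eq_zero {R σ : Type*} [CommRing R]
    [IsDomain R] [Infinite R] (i : σ) (c : R) {p : MvPolynomial σ R}
    (h : ∀ v : σ → R, (v i - c) * eval v p = 0) : p = 0 := by
  have hprod : (X i - C c) * p = 0 := funext fun v => by simpa using h v
  have hne : (X i - C c : MvPolynomial σ R) ≠ 0 := fun h0 => by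
    simpa using congrArg (eval fun _ => c + 1) h0
  exact (mul_eq_zero.mp hprod).resolve_left hne

theorem MvPolynomial.eq_zero_of_forall_sub_mul_eval_vecCons_eq_zero {R : Type*} [CommRing R]
    [IsDomain R] [Infinite R] (c : R) {p : MvPolynomial (Fin 2) R}
    (h : ∀ x l : R, (l - c) * eval ![x, l] p = 0) : p = 0 :=
  eq_zero_of_forall_sub_mul_eval_eq_zero 1 c fun v => by
    simpa [show ![v 0, v 1] = v from FinVec.etaExpand_eq v] using h (v 0) (v 1)

/-- Case a = 0 of the conformal-derivation computation for CSV(0,b): the identities from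
[L_0 μ Y_i] = (∂+μ+b/2)Y_i force h₁ = h₂ = h₃ = 0 and p = 0. -/
theorem stmt14 (b p : ℂ) (h₁ h₂ h₃ : MvPolynomial (Fin 2) ℂ)
    (e1 : ∀ x l μ : ℂ,
      (x + l + μ + b/2) * MvPolynomial.eval ![x, l] h₁
        = (x + 2*μ) * MvPolynomial.eval ![x + μ, l] h₁)
    (e2 : ∀ x l μ : ℂ,
      (x + l + μ + b/2) * MvPolynomial.eval ![x, l] h₂
        = (x + b) * MvPolynomial.eval ![x + μ, l] h₂ + p * (x + 2*l + 2*μ))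
    (e3 : ∀ x l μ : ℂ,
      (x + l + μ + b/2) * MvPolynomial.eval ![x, l] h₃
        = (x + μ + b/2) * MvPolynomial.eval ![x + μ, l] h₃) :
    h₁ = 0 ∧ h₂ = 0 ∧ h₃ = 0 ∧ p = 0 := by
  have hp : p = 0 := by
    have h := e2 (1 - b) (b/2) 0
    simp only [add_zero, mul_zero] at h
    linear_combination -h
  refine ⟨?_, ?_, ?_, hp⟩
  · refine eq_zero_of_forall_sub_mul_eval_vecCons_eq_zero (-(b/2)) fun x l => ?_
    have h := e1 x l 0
    simp only [add_zero, mul_zero] at h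
    linear_combination h
  · refine eq_zero_of_forall_sub_mul_eval_vecCons_eq_zero (b/2) fun x l => ?_
    have h := e2 x l 0
    simp only [add_zero, mul_zero, hp, zero_mul] at h
    linear_combination h
  · refine eq_zero_of_forall_sub_mul_eval_vecCons_eq_zero 0 fun x l => ?_
    have h := e3 x l 0
    simp only [add_zero] at h
    linear_combination h
end

section
/- Let a, b, α, β ∈ ℂ with b ≠ 0. Suppose h_{i,m} ∈ ℂ[∂,λ] satisfy: (i) h_{0,m} ∈ ℂ[λ] (independent of ∂), (ii) ((a/2)λ - μ + b/2)·h_{0,m}(λ+μ) = -μ·h_{0,m}(μ) in ℂ[λ,μ] for all m, and (iii) h_{0,m}(∂+λ,μ)·(∂+αλ+β) - (∂+μ+αλ+β)·h_{0,i+m}(∂,μ) = ((a/2)λ-μ+b/2)·h_{i,m}(∂,λ+μ) for all i, m (the j = 0 case of the L-Y compatibility). Then h_{i,m} = 0 for all i, m ∈ ℤ. -/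
/-!
Setting `λ = 0` in (ii) leaves `(b/2) h_{0,m}(μ) = 0`, so `h_{0,·}` vanishes as `b ≠ 0`. Then (iii) at
`λ = 0` reads `(b/2 - μ) h_{i,m}(∂, μ) = 0`, and `b/2 - μ` is a nonzero polynomial, so `h_{i,m} = 0`.
-/

namespace MvPolynomial

variable {R σ : Type*} [CommRing R]

theorem C_sub_X_ne_zero [Nontrivial R] (c : R) (j : σ) : (C c - X j : MvPolynomial σ R) ≠ 0 := by
  intro hzero
  simpa using congrArg (eval fun _ => c + 1) hzero

variable [IsDomain R] [Infinite R]

theorem eq_zero_of_forall_sub_mul_eval_eq_zero_s19 {p : MvPolynomial σ R} (c : R) (j : σ)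
    (hp : ∀ v : σ → R, (c - v j) * eval v p = 0) : p = 0 := by
  have hprod : (C c - X j) * p = 0 := funext fun v => by simpa using hp v
  exact (mul_eq_zero.mp hprod).resolve_left (C_sub_X_ne_zero c j)

theorem eq_zero_of_forall_sub_mul_eval_fin_two_eq_zero {p : MvPolynomial (Fin 2) R} (c : R)
    (hp : ∀ x y : R, (c - y) * eval ![x, y] p = 0) : p = 0 :=
  eq_zero_of_forall_sub_mul_eval_eq_zero_s19 c 1 fun v => by
    simpa [show ![v 0, v 1] = v from List.ofFn_inj.mp rfl] using hp (v 0) (v 1)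

end MvPolynomial

open MvPolynomial

theorem stmt19_general (a b α β : ℂ) (hb : b ≠ 0) (h : ℤ → ℤ → MvPolynomial (Fin 2) ℂ)
    (hii : ∀ (m : ℤ) (x l μ : ℂ),
      ((a/2)*l - μ + b/2) * MvPolynomial.eval ![x, l + μ] (h 0 m)
        = -μ * MvPolynomial.eval ![x, μ] (h 0 m))
    (hiii : ∀ (i m : ℤ) (x l μ : ℂ),
      MvPolynomial.eval ![x + l, μ] (h 0 m) * (x + α*l + β)
        - (x + μ + α*l + β) * MvPolynomial.eval ![x, μ] (h 0 (i + m))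
        = ((a/2)*l - μ + b/2) * MvPolynomial.eval ![x, l + μ] (h i m)) :
    ∀ (i m : ℤ), h i m = 0 := by
  have h0_eval : ∀ (m : ℤ) (x μ : ℂ), eval ![x, μ] (h 0 m) = 0 := by
    intro m x μ
    have hl0 := hii m x 0 μ
    have half_b : (b / 2) * eval ![x, μ] (h 0 m) = 0 := by
      rw [zero_add] at hl0
      linear_combination hl0
    exact (mul_eq_zero.mp half_b).resolve_left (div_ne_zero hb two_ne_zero)
  intro i m
  refine eq_zero_of_forall_sub_mul_eval_fin_two_eq_zero (b / 2) fun x μ => ?_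
  have hl0 := hiii i m x 0 μ
  rw [h0_eval, h0_eval, zero_add] at hl0
  linear_combination -hl0

/-- Case 1 (b ≠ 0) of Lemma 5.2: given (i) h_{0,m} independent of ∂, (ii)
((a/2)λ - μ + b/2)h_{0,m}(λ+μ) = -μ h_{0,m}(μ), and (iii) the j = 0 case of the L-Y
compatibility, all h_{i,m} = 0. -/
theorem stmt19 (a b α β : ℂ) (hb : b ≠ 0) (h : ℤ → ℤ → MvPolynomial (Fin 2) ℂ)
    (h0indep : ∀ (m : ℤ) (x x' y : ℂ),
      MvPolynomial.eval ![x, y] (h 0 m) = MvPolynomial.eval ![x', y] (h 0 m))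
    (hii : ∀ (m : ℤ) (x l μ : ℂ),
      ((a/2)*l - μ + b/2) * MvPolynomial.eval ![x, l + μ] (h 0 m)
        = -μ * MvPolynomial.eval ![x, μ] (h 0 m))
    (hiii : ∀ (i m : ℤ) (x l μ : ℂ),
      MvPolynomial.eval ![x + l, μ] (h 0 m) * (x + α*l + β)
        - (x + μ + α*l + β) * MvPolynomial.eval ![x, μ] (h 0 (i + m))
        = ((a/2)*l - μ + b/2) * MvPolynomial.eval ![x, l + μ] (h i m)) :
    ∀ (i m : ℤ), h i m = 0 :=
  stmt19_general a b α β hb h hii hiii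
end
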